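/- Let H^{(0)}, H^{(1)} be translationally invariant nearest-neighbor Hamiltonians on a chain of N sites with local dimension d, with unique ground states, ground energies E_0^{(j)} and gaps Δ^{(j)}. Define K on the chain with local dimension 2d by K = Σ_i K_{i,i+1} with K_{i,i+1} = (1/3)H^{(0)}_{i,i+1}⊗|00⟩⟨00|_{A_iA_{i+1}} + (1/3)H^{(1)}_{i,i+1}⊗|11⟩⟨11|_{A_iA_{i+1}} + I⊗(|01⟩⟨01|+|10⟩⟨10|)_{A_iA_{i+1}}. Then the ground state energy of K equals (1/3)·min_j E_0^{(j)}. -/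

import Mathlib

open Matrix

/-- Operator norm of a matrix, acting on the Euclidean space. -/
noncomputable def opNorm {n : Type*} [Fintype n] [DecidableEq n]
    (A : Matrix n n ℂ) : ℝ :=
  ‖Matrix.toEuclideanCLM (𝕜 := ℂ) A‖

/-- The nearest-neighbor term `h` acting on sites `i, i+1` of a chain of `N` sites with
local space `α` (identity elsewhere). -/
noncomputable def twoSite (N : ℕ) {α : Type*} [Fintype α] [DecidableEq α]
    (h : Matrix (α × α) (α × α) ℂ) (i : ℕ) (hi : i + 1 < N) :
    Matrix (Fin N → α) (Fin N → α) ℂ :=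
  Matrix.of fun x y =>
    if ∀ j : Fin N, j.val ≠ i → j.val ≠ i + 1 → x j = y j then
      h (x ⟨i, by omega⟩, x ⟨i + 1, hi⟩) (y ⟨i, by omega⟩, y ⟨i + 1, hi⟩)
    else 0

/-- The translationally invariant nearest-neighbor Hamiltonian `H = Σ_{i=0}^{N-2} h_{i,i+1}`. -/
noncomputable def chainH (N : ℕ) {α : Type*} [Fintype α] [DecidableEq α]
    (h : Matrix (α × α) (α × α) ℂ) : Matrix (Fin N → α) (Fin N → α) ℂ :=
  ∑ i : Fin (N - 1), twoSite N h i.val (by have := i.isLt; omega)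

/-- Energy `⟨φ|H|φ⟩` of a state `φ`. -/
noncomputable def energyR {n : Type*} [Fintype n] (H : Matrix n n ℂ) (φ : n → ℂ) : ℝ :=
  (star φ ⬝ᵥ H.mulVec φ).re

/-- The two-site interaction term of the combined Hamiltonian `K`:
`(1/3)h⁰⊗|00⟩⟨00| + (1/3)h¹⊗|11⟩⟨11| + I⊗(|01⟩⟨01|+|10⟩⟨10|)`, where each site carries an
ancilla qubit (local space `Fin d × Fin 2`). -/
noncomputable def Kterm (d : ℕ) (h0 h1 : Matrix (Fin d × Fin d) (Fin d × Fin d) ℂ) :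
    Matrix ((Fin d × Fin 2) × (Fin d × Fin 2)) ((Fin d × Fin 2) × (Fin d × Fin 2)) ℂ :=
  Matrix.of fun p q =>
    if p.1.2 = q.1.2 ∧ p.2.2 = q.2.2 then
      if p.1.2 = 0 ∧ p.2.2 = 0 then (1 / 3 : ℂ) * h0 (p.1.1, p.2.1) (q.1.1, q.2.1)
      else if p.1.2 = 1 ∧ p.2.2 = 1 then (1 / 3 : ℂ) * h1 (p.1.1, p.2.1) (q.1.1, q.2.1)
      else if p.1.1 = q.1.1 ∧ p.2.1 = q.2.1 then 1 else 0
    else 0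


/-!
Since `K` never flips an ancilla, it is block diagonal over the ancilla configurations
`a ∈ {0,1}^N`. In sector `a` the bond `(i, i+1)` acts as `h^{(j)}/3` if `a_i = a_{i+1} = j` and
as the identity across a domain wall `a_i ≠ a_{i+1}`. A constant sector reproduces `H^{(j)}/3`,
which gives the value `(1/3)·min_j E₀^{(j)}`.

For the lower bound, a run of length `ℓ` of type `j` costs at least `E^{(j)}(ℓ)/3`, where `E(ℓ)`
is the ground energy of the open chain of length `ℓ`. As `‖h‖ ≤ 1`, cutting or joining a chain
changes `E` by at most one bond: `E(A) + E(B) - 1 ≤ E(A + B) ≤ E(A) + E(B) + 1` (restriction to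
windows, resp. product states). Cutting a chain of length `ℓN` once into blocks of length `ℓ` and
once into blocks of length `N` yields `N·E(ℓ) ≥ ℓ·E(N) - ℓ - N + 2`. With these run bounds, each
domain wall (cost `1`) more than pays for the cut it creates, so a sector with a wall has energy at
least `(1/3)·min_j E^{(j)}(N) + 4/(3N)`.
-/

open Finset

section Energy

variable {n : Type*} [Fintype n]

def energies (H : Matrix n n ℂ) : Set ℝ :=
  {r | ∃ φ : n → ℂ, (∑ x, ‖φ x‖ ^ 2) = 1 ∧ r = energyR H φ}

noncomputable def groundEnergy (H : Matrix n n ℂ) : ℝ :=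
  sInf (energies H)

lemma energyR_sum {ι : Type*} (t : Finset ι) (A : ι → Matrix n n ℂ) (z : n → ℂ) :
    energyR (∑ i ∈ t, A i) z = ∑ i ∈ t, energyR (A i) z := by
  simp only [energyR, sum_mulVec, dotProduct_sum, Complex.re_sum]

lemma energyR_ofReal_smul (c : ℝ) (A : Matrix n n ℂ) (z : n → ℂ) :
    energyR ((c : ℂ) • A) z = c * energyR A z := by
  rw [energyR, smul_mulVec, dotProduct_smul, smul_eq_mul, Complex.re_ofReal_mul, energyR]

lemma star_dotProduct_self (z : n → ℂ) : star z ⬝ᵥ z = ((∑ x, ‖z x‖ ^ 2 : ℝ) : ℂ) := by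
  simp only [dotProduct, Pi.star_apply, Complex.ofReal_sum, Complex.ofReal_pow]
  exact sum_congr rfl fun x _ => RCLike.conj_mul (z x)

lemma energyR_one [DecidableEq n] (z : n → ℂ) :
    energyR (1 : Matrix n n ℂ) z = ∑ x, ‖z x‖ ^ 2 := by
  rw [energyR, one_mulVec, star_dotProduct_self, Complex.ofReal_re]

lemma energyR_smul (H : Matrix n n ℂ) (c : ℂ) (z : n → ℂ) :
    energyR H (c • z) = ‖c‖ ^ 2 * energyR H z := by
  rw [energyR, mulVec_smul, star_smul, smul_dotProduct, dotProduct_smul, smul_eq_mul,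
    smul_eq_mul, ← mul_assoc, show star c * c = ((‖c‖ ^ 2 : ℝ) : ℂ) by
      rw [Complex.ofReal_pow]; exact RCLike.conj_mul c, Complex.re_ofReal_mul, energyR]

lemma energyR_zero (H : Matrix n n ℂ) : energyR H 0 = 0 := by
  simp [energyR]

lemma energyR_submatrix_equiv {m : Type*} [Fintype m] (H : Matrix n n ℂ) (e : m ≃ n)
    (z : n → ℂ) : energyR (H.submatrix e e) (z ∘ e) = energyR H z := by
  rw [energyR, submatrix_mulVec_equiv, Function.comp_assoc, e.self_comp_symm, Function.comp_id,
    energyR, dotProduct, dotProduct]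
  exact congrArg _ (e.sum_comp fun x => star z x * (H *ᵥ z) x)

lemma energyR_blockDiagonal {X Y : Type*} [Fintype X] [Fintype Y] [DecidableEq Y]
    (G : Y → Matrix X X ℂ) (φ : X × Y → ℂ) :
    energyR (blockDiagonal G) φ = ∑ y, energyR (G y) (fun x => φ (x, y)) := by
  simp only [energyR, ← Complex.re_sum]
  congr 1
  rw [dotProduct, Fintype.sum_prod_type_right]
  refine sum_congr rfl fun y _ => sum_congr rfl fun x _ => ?_
  rw [mulVec, dotProduct, Fintype.sum_prod_type_right, sum_eq_single y]
  · simp only [blockDiagonal_apply_eq, Pi.star_apply]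
    rfl
  · intro y' _ hy
    simp [blockDiagonal_apply_ne _ _ _ (Ne.symm hy)]
  · simp

lemma energyR_eq_sum_blocks {X Y : Type*} [Fintype X] [Fintype Y] [DecidableEq Y]
    (e : X × Y ≃ n) {M : Matrix n n ℂ} {G : Y → Matrix X X ℂ}
    (hM : M.submatrix e e = blockDiagonal G) (Ψ : n → ℂ) :
    energyR M Ψ = ∑ y, energyR (G y) (fun x => Ψ (e (x, y))) := by
  rw [← energyR_submatrix_equiv M e, hM, energyR_blockDiagonal]
  rfl

lemma sum_norm_sq_eq_sum_blocks {X Y : Type*} [Fintype X] [Fintype Y] (e : X × Y ≃ n)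
    (Ψ : n → ℂ) : ∑ x, ‖Ψ x‖ ^ 2 = ∑ y, ∑ x, ‖Ψ (e (x, y))‖ ^ 2 := by
  rw [← e.sum_comp, Fintype.sum_prod_type_right]

lemma abs_energyR_le [DecidableEq n] (A : Matrix n n ℂ) (z : n → ℂ) :
    |energyR A z| ≤ opNorm A * ∑ x, ‖z x‖ ^ 2 := by
  set z' : EuclideanSpace ℂ n := WithLp.toLp 2 z
  have hquad : star z ⬝ᵥ A *ᵥ z = inner ℂ z' (toEuclideanCLM (𝕜 := ℂ) A z') := by
    rw [EuclideanSpace.inner_eq_star_dotProduct, dotProduct_comm]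
    rfl
  have hnorm : ‖z'‖ ^ 2 = ∑ x, ‖z x‖ ^ 2 := by
    rw [EuclideanSpace.norm_eq, Real.sq_sqrt (by positivity)]
  calc |energyR A z| ≤ ‖inner ℂ z' (toEuclideanCLM (𝕜 := ℂ) A z')‖ := by
        rw [energyR, hquad]
        exact Complex.abs_re_le_norm _
    _ ≤ ‖z'‖ * (opNorm A * ‖z'‖) :=
        (norm_inner_le_norm _ _).trans
          (mul_le_mul_of_nonneg_left ((toEuclideanCLM (𝕜 := ℂ) A).le_opNorm z') (norm_nonneg _))
    _ = opNorm A * ∑ x, ‖z x‖ ^ 2 := by rw [← hnorm]; ring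

lemma energies_eq_image_sphere (H : Matrix n n ℂ) :
    energies H = (fun φ : EuclideanSpace ℂ n => energyR H φ.ofLp) '' Metric.sphere 0 1 := by
  ext r
  simp only [energies, Set.mem_ofPred_eq, Set.mem_image, mem_sphere_zero_iff_norm,
    EuclideanSpace.norm_eq, Real.sqrt_eq_one]
  constructor
  · rintro ⟨φ, hφ, rfl⟩
    exact ⟨WithLp.toLp 2 φ, hφ, rfl⟩
  · rintro ⟨φ, hφ, rfl⟩
    exact ⟨φ.ofLp, hφ, rfl⟩

lemma isLeast_groundEnergy [Nonempty n] (H : Matrix n n ℂ) :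
    IsLeast (energies H) (groundEnergy H) := by
  have hcont : Continuous fun φ : EuclideanSpace ℂ n => energyR H φ.ofLp := by
    unfold energyR
    fun_prop
  obtain ⟨μ, hμ⟩ := ((isCompact_sphere 0 1).image hcont).exists_isLeast
    ((NormedSpace.sphere_nonempty.2 zero_le_one).image _)
  rw [← energies_eq_image_sphere] at hμ
  rwa [groundEnergy, hμ.csInf_eq]

lemma nonempty_of_mem_energies {H : Matrix n n ℂ} {r : ℝ} (hr : r ∈ energies H) : Nonempty n := by
  obtain ⟨φ, hφ, -⟩ := hr
  by_contra hn
  rw [not_nonempty_iff] at hn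
  simp at hφ

lemma mul_le_energyR_of_mem_lowerBounds {H : Matrix n n ℂ} {μ : ℝ}
    (hμ : μ ∈ lowerBounds (energies H)) (z : n → ℂ) :
    μ * ∑ x, ‖z x‖ ^ 2 ≤ energyR H z := by
  set s := ∑ x, ‖z x‖ ^ 2
  rcases (sum_nonneg fun x _ => by positivity : 0 ≤ s).eq_or_lt with hs | hs
  · have hz : z = 0 := funext fun x => by
      simpa using (sum_eq_zero_iff_of_nonneg fun x _ => by positivity).1 hs.symm x (mem_univ x)
    rw [show s = 0 from hs.symm, mul_zero, hz, energyR_zero]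
  set c : ℂ := (((√s)⁻¹ : ℝ) : ℂ)
  have hc : ‖c‖ ^ 2 = s⁻¹ := by
    rw [Complex.norm_real, Real.norm_eq_abs, sq_abs, inv_pow, Real.sq_sqrt hs.le]
  have hnormed : ∑ x, ‖(c • z) x‖ ^ 2 = 1 := by
    simp only [Pi.smul_apply, norm_smul, mul_pow, ← mul_sum, hc]
    exact inv_mul_cancel₀ hs.ne'
  have := hμ ⟨c • z, hnormed, rfl⟩
  rwa [energyR_smul, hc, ← div_eq_inv_mul, le_div_iff₀ hs] at this

end Energy

section Sequences

lemma sum_Ico_split (f : ℕ → ℝ) {s u t : ℕ} (hsu : s < u) (hut : u < t) :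
    ∑ i ∈ Ico s (t - 1), f i = ∑ i ∈ Ico s (u - 1), f i + f (u - 1) + ∑ i ∈ Ico u (t - 1), f i := by
  rw [← sum_Ico_consecutive f (show s ≤ u - 1 by omega) (show u - 1 ≤ t - 1 by omega),
    sum_eq_sum_Ico_succ_bot (show u - 1 < t - 1 by omega), show u - 1 + 1 = u by omega, add_assoc]

lemma sum_comp_of_bijective {α ι κ : Type*} [Fintype α] [Fintype ι] [Fintype κ] [DecidableEq ι]
    [DecidableEq κ] {σ : κ → ι} (hσ : σ.Bijective) (F : (κ → α) → ℝ) :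
    ∑ r : ι → α, F (r ∘ σ) = ∑ w, F w :=
  (Equiv.arrowCongr (Equiv.ofBijective σ hσ).symm (Equiv.refl α)).sum_comp F

lemma apply_mul_le_of_le_add_add {g : ℕ → ℝ} {C : ℝ}
    (hg : ∀ a b, 0 < a → 0 < b → g (a + b) ≤ g a + g b + C) {L : ℕ} (hL : 0 < L) {t : ℕ}
    (ht : 0 < t) : g (t * L) ≤ t * g L + (t - 1) * C := by
  induction t, ht using Nat.le_induction with
  | base => simp
  | succ t ht ih =>
    rw [Nat.succ_mul]
    push_cast
    linarith [hg (t * L) L (Nat.mul_pos ht hL) hL]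

lemma exists_ne_succ_of_not_forall_eq {β : Type*} (c : ℕ → β) {s t : ℕ}
    (h : ¬ ∀ u ∈ Ico s t, c u = c s) : ∃ u, s < u ∧ u < t ∧ c (u - 1) ≠ c u := by
  by_contra! hwall
  refine h fun u hu => ?_
  rw [mem_Ico] at hu
  obtain ⟨hsu, hut⟩ := hu
  induction u, hsu using Nat.le_induction with
  | base => rfl
  | succ u hsu ih => rw [← hwall (u + 1) (by omega) hut, Nat.add_sub_cancel, ih (by omega)]

lemma le_sum_Ico_of_runs {β : Type*} (c : ℕ → β) (f R : ℕ → ℝ) (w : ℝ) {n : ℕ}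
    (hR : ∀ a b, 0 < a → 0 < b → R (a + b) ≤ R a + w + R b)
    (hrun : ∀ s t, s < t → t ≤ n → (∀ u ∈ Ico s t, c u = c s) →
      R (t - s) ≤ ∑ i ∈ Ico s (t - 1), f i)
    (hwall : ∀ i, i + 1 < n → c i ≠ c (i + 1) → w ≤ f i)
    {s t : ℕ} (hst : s < t) (ht : t ≤ n) : R (t - s) ≤ ∑ i ∈ Ico s (t - 1), f i := by
  induction hk : t - s using Nat.strong_induction_on generalizing s t with
  | _ k ih =>
    by_cases hc : ∀ u ∈ Ico s t, c u = c s
    · exact hk ▸ hrun s t hst ht hc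
    obtain ⟨u, hsu, hut, hne⟩ := exists_ne_succ_of_not_forall_eq c hc
    have hleft := ih (u - s) (by omega) hsu (by omega) rfl
    have hright := ih (t - u) (by omega) hut ht rfl
    have hmid := hwall (u - 1) (by omega) (by rwa [Nat.sub_add_cancel (by omega : 1 ≤ u)])
    have hsplit := hR (u - s) (t - u) (by omega) (by omega)
    rw [show u - s + (t - u) = k by omega] at hsplit
    rw [sum_Ico_split f hsu hut]
    linarith

end Sequences

section Bonds

variable {n : Type*} [Fintype n]

noncomputable def bondEnergy (N : ℕ) (B : ∀ i, i + 1 < N → Matrix n n ℂ) (z : n → ℂ) (i : ℕ) :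
    ℝ :=
  if hi : i + 1 < N then energyR (B i hi) z else 0

lemma bondEnergy_of_lt {N : ℕ} (B : ∀ i, i + 1 < N → Matrix n n ℂ) (z : n → ℂ) {i : ℕ}
    (hi : i + 1 < N) : bondEnergy N B z i = energyR (B i hi) z :=
  dif_pos hi

lemma energyR_sum_bonds (N : ℕ) (B : ∀ i, i + 1 < N → Matrix n n ℂ) (z : n → ℂ) :
    energyR (∑ i : Fin (N - 1), B i (by omega)) z = ∑ i ∈ range (N - 1), bondEnergy N B z i := by
  rw [energyR_sum, ← Fin.sum_univ_eq_sum_range]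
  exact sum_congr rfl fun i _ => (bondEnergy_of_lt B z _).symm

lemma energyR_chainH {α : Type*} [Fintype α] [DecidableEq α] (N : ℕ)
    (h : Matrix (α × α) (α × α) ℂ) (Ψ : (Fin N → α) → ℂ) :
    energyR (chainH N h) Ψ = ∑ i ∈ range (N - 1), bondEnergy N (twoSite N h) Ψ i :=
  energyR_sum_bonds N (twoSite N h) Ψ

end Bonds

section Window

variable {α : Type*} (N s L : ℕ)

abbrev Outside : Type := {j : Fin N // j.val < s ∨ s + L ≤ j.val}

variable {N s L}

def glue (v : Fin L → α) (r : Outside N s L → α) : Fin N → α :=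
  fun j => if h : s ≤ j.val ∧ j.val < s + L then v ⟨j.val - s, by omega⟩ else r ⟨j, by omega⟩

lemma glue_apply_of_eq (v : Fin L → α) (r : Outside N s L → α) {j : Fin N} {k : Fin L}
    (hjk : j.val = s + k.val) : glue v r j = v k := by
  rw [glue, dif_pos (by omega)]
  exact congrArg v (Fin.ext (by simp only; omega))

lemma glue_apply_outside (v : Fin L → α) (r : Outside N s L → α) (j : Outside N s L) :
    glue v r j.val = r j := by
  rw [glue, dif_neg (by omega)]

def windowEquiv (hs : s + L ≤ N) : (Fin L → α) × (Outside N s L → α) ≃ (Fin N → α) where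
  toFun p := glue p.1 p.2
  invFun x := (fun k => x ⟨s + k.val, by omega⟩, fun j => x j.val)
  left_inv p := Prod.ext (funext fun k => glue_apply_of_eq _ _ rfl)
    (funext fun j => glue_apply_outside _ _ j)
  right_inv x := funext fun j => by
    dsimp only [glue]
    split
    · exact congrArg x (Fin.ext (by simp only; omega))
    · rfl

lemma windowEquiv_apply (hs : s + L ≤ N) (p : (Fin L → α) × (Outside N s L → α)) :
    windowEquiv hs p = glue p.1 p.2 := rfl

variable [Fintype α] [DecidableEq α]

lemma twoSite_submatrix_windowEquiv (hs : s + L ≤ N) (h : Matrix (α × α) (α × α) ℂ) {k : ℕ}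
    (hk : k + 1 < L) :
    (twoSite N h (s + k) (by omega)).submatrix (windowEquiv hs) (windowEquiv hs)
      = blockDiagonal fun _ => twoSite L h k hk := by
  ext ⟨v, r⟩ ⟨w, r'⟩
  have hagree : (∀ j : Fin N, j.val ≠ s + k → j.val ≠ s + k + 1 → glue v r j = glue w r' j) ↔
      r = r' ∧ ∀ j : Fin L, j.val ≠ k → j.val ≠ k + 1 → v j = w j := by
    constructor
    · intro H
      refine ⟨funext fun j => ?_, fun j hj1 hj2 => ?_⟩
      · simpa only [glue_apply_outside] using H j.val (by omega) (by omega)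
      · simpa only [glue_apply_of_eq v r (k := j) (j := ⟨s + j.val, by omega⟩) rfl,
          glue_apply_of_eq w r' (k := j) (j := ⟨s + j.val, by omega⟩) rfl]
          using H ⟨s + j.val, by omega⟩ (by simp only; omega) (by simp only; omega)
    · rintro ⟨rfl, H⟩ j hj1 hj2
      by_cases hj : s ≤ j.val ∧ j.val < s + L
      · rw [glue, glue, dif_pos hj, dif_pos hj]
        exact H _ (by simp only; omega) (by simp only; omega)
      · rw [glue, glue, dif_neg hj, dif_neg hj]
  have hsites : ∀ (u : Fin L → α) (t : Outside N s L → α),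
      glue u t ⟨s + k, by omega⟩ = u ⟨k, by omega⟩ ∧
        glue u t ⟨s + k + 1, by omega⟩ = u ⟨k + 1, hk⟩ :=
    fun u t => ⟨glue_apply_of_eq u t rfl, glue_apply_of_eq u t (by simp only; omega)⟩
  simp only [submatrix_apply, windowEquiv_apply, blockDiagonal_apply, twoSite, of_apply,
    if_congr hagree rfl rfl, ite_and, hsites]

lemma sum_bondEnergy_window (hs : s + L ≤ N) (h : Matrix (α × α) (α × α) ℂ)
    (Ψ : (Fin N → α) → ℂ) :
    ∑ i ∈ Ico s (s + L - 1), bondEnergy N (twoSite N h) Ψ i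
      = ∑ r, energyR (chainH L h) (fun v => Ψ (windowEquiv hs (v, r))) := by
  simp only [energyR_chainH, sum_Ico_eq_sum_range, show s + L - 1 - s = L - 1 by omega]
  rw [sum_comm]
  refine sum_congr rfl fun k hk => ?_
  have hk : k + 1 < L := by rw [mem_range] at hk; omega
  rw [bondEnergy_of_lt _ _ (by omega : s + k + 1 < N),
    energyR_eq_sum_blocks _ (twoSite_submatrix_windowEquiv hs h hk)]
  simp only [bondEnergy_of_lt _ _ hk]

lemma groundEnergy_mul_le_sum_bondEnergy [Nonempty α] (hs : s + L ≤ N)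
    (h : Matrix (α × α) (α × α) ℂ) (Ψ : (Fin N → α) → ℂ) :
    groundEnergy (chainH L h) * ∑ x, ‖Ψ x‖ ^ 2
      ≤ ∑ i ∈ Ico s (s + L - 1), bondEnergy N (twoSite N h) Ψ i := by
  rw [sum_bondEnergy_window hs, sum_norm_sq_eq_sum_blocks (windowEquiv hs), mul_sum]
  exact sum_le_sum fun r _ => mul_le_energyR_of_mem_lowerBounds (isLeast_groundEnergy _).2 _

lemma sum_bondEnergy_window_of_slices (hs : s + L ≤ N) (h : Matrix (α × α) (α × α) ℂ)
    {Ψ : (Fin N → α) → ℂ} {φ : (Fin L → α) → ℂ} {c : (Outside N s L → α) → ℂ}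
    (hc : ∀ v r, Ψ (windowEquiv hs (v, r)) = c r * φ v) :
    ∑ i ∈ Ico s (s + L - 1), bondEnergy N (twoSite N h) Ψ i
      = (∑ r, ‖c r‖ ^ 2) * energyR (chainH L h) φ := by
  rw [sum_bondEnergy_window hs, sum_mul]
  refine sum_congr rfl fun r _ => ?_
  rw [← energyR_smul]
  exact congrArg _ (funext fun v => hc v r)

lemma bijective_natAdd_outside (A B : ℕ) :
    Function.Bijective fun k : Fin B =>
      (⟨Fin.natAdd A k, Or.inr (by simp)⟩ : Outside (A + B) 0 A) := by
  refine ⟨fun k k' hk => ?_, fun j => ⟨⟨j.1 - A, by omega⟩, ?_⟩⟩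
  · simp only [Subtype.ext_iff, Fin.ext_iff, Fin.val_natAdd] at hk
    exact Fin.ext (by omega)
  · exact Subtype.ext (Fin.ext (by simp only [Fin.val_natAdd]; omega))

lemma bijective_castAdd_outside (A B : ℕ) :
    Function.Bijective fun k : Fin A =>
      (⟨Fin.castAdd B k, Or.inl (by simp)⟩ : Outside (A + B) A B) := by
  refine ⟨fun k k' hk => ?_, fun j => ⟨⟨j.1, by omega⟩, ?_⟩⟩
  · simp only [Subtype.ext_iff, Fin.ext_iff, Fin.val_castAdd] at hk
    exact Fin.ext hk
  · exact Subtype.ext (Fin.ext (by simp only [Fin.val_castAdd]))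

lemma chainH_two_submatrix (h : Matrix (α × α) (α × α) ℂ) :
    (chainH 2 h).submatrix (finTwoArrowEquiv α).symm (finTwoArrowEquiv α).symm = h := by
  ext ⟨a, b⟩ ⟨c, d⟩
  simp [chainH, twoSite]

lemma abs_bondEnergy_le (h : Matrix (α × α) (α × α) ℂ) (Ψ : (Fin N → α) → ℂ) (i : ℕ) :
    |bondEnergy N (twoSite N h) Ψ i| ≤ opNorm h * ∑ x, ‖Ψ x‖ ^ 2 := by
  by_cases hi : i + 1 < N
  · have hs : i + 2 ≤ N := hi
    have hpair : ∀ z : (Fin 2 → α) → ℂ,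
        |energyR (chainH 2 h) z| ≤ opNorm h * ∑ v, ‖z v‖ ^ 2 := fun z => by
      rw [← energyR_submatrix_equiv _ (finTwoArrowEquiv α).symm, chainH_two_submatrix,
        ← (finTwoArrowEquiv α).symm.sum_comp]
      exact abs_energyR_le h _
    have hwindow := sum_bondEnergy_window hs h Ψ
    rw [show i + 2 - 1 = i + 1 by omega, sum_Ico_succ_top le_rfl, Ico_self, sum_empty,
      zero_add] at hwindow
    rw [hwindow, sum_norm_sq_eq_sum_blocks (windowEquiv hs), mul_sum]
    exact (abs_sum_le_sum_abs _ _).trans (sum_le_sum fun r _ => hpair _)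
  · rw [bondEnergy, dif_neg hi, abs_zero]
    exact mul_nonneg (norm_nonneg _) (sum_nonneg fun x _ => by positivity)

end Window

section ChainGroundEnergy

variable {α : Type*} [Fintype α] [DecidableEq α] (h : Matrix (α × α) (α × α) ℂ)

lemma energyR_chainH_add {A B : ℕ} (hA : 0 < A) (hB : 0 < B) (Ψ : (Fin (A + B) → α) → ℂ) :
    energyR (chainH (A + B) h) Ψ
      = ∑ i ∈ Ico 0 (0 + A - 1), bondEnergy (A + B) (twoSite (A + B) h) Ψ i
        + bondEnergy (A + B) (twoSite (A + B) h) Ψ (A - 1)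
        + ∑ i ∈ Ico A (A + B - 1), bondEnergy (A + B) (twoSite (A + B) h) Ψ i := by
  rw [energyR_chainH, range_eq_Ico, zero_add, sum_Ico_split _ hA (by omega)]

variable [Nonempty α]

lemma groundEnergy_chainH_add_sub_one_le (hop : opNorm h ≤ 1) {A B : ℕ} (hA : 0 < A)
    (hB : 0 < B) :
    groundEnergy (chainH A h) + groundEnergy (chainH B h) - 1
      ≤ groundEnergy (chainH (A + B) h) := by
  obtain ⟨Φ, hΦ, hE⟩ := (isLeast_groundEnergy (chainH (A + B) h)).1
  have hleft := groundEnergy_mul_le_sum_bondEnergy (s := 0) (L := A) (by omega) h Φ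
  have hright := groundEnergy_mul_le_sum_bondEnergy (s := A) (L := B) le_rfl h Φ
  have hmid := abs_bondEnergy_le h Φ (A - 1)
  rw [hΦ, mul_one] at hleft hright hmid
  rw [hE, energyR_chainH_add h hA hB]
  linarith [(abs_le.1 hmid).1]

lemma groundEnergy_chainH_add_le (hop : opNorm h ≤ 1) {A B : ℕ} (hA : 0 < A) (hB : 0 < B) :
    groundEnergy (chainH (A + B) h)
      ≤ groundEnergy (chainH A h) + groundEnergy (chainH B h) + 1 := by
  obtain ⟨φ, hφ, hφE⟩ := (isLeast_groundEnergy (chainH A h)).1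
  obtain ⟨ψ, hψ, hψE⟩ := (isLeast_groundEnergy (chainH B h)).1
  set Φ : (Fin (A + B) → α) → ℂ :=
    fun x => φ (fun k => x (Fin.castAdd B k)) * ψ (fun k => x (Fin.natAdd A k))
  have hL : 0 + A ≤ A + B := by omega
  set σL : Fin B → Outside (A + B) 0 A := fun k => ⟨Fin.natAdd A k, Or.inr (by simp)⟩
  set σR : Fin A → Outside (A + B) A B := fun k => ⟨Fin.castAdd B k, Or.inl (by simp)⟩
  have hσL : σL.Bijective := bijective_natAdd_outside A B
  have hσR : σR.Bijective := bijective_castAdd_outside A B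
  have hsliceL : ∀ v r, Φ (windowEquiv hL (v, r)) = ψ (r ∘ σL) * φ v := fun v r => by
    show φ (fun k => glue v r (Fin.castAdd B k)) * ψ (fun k => glue v r (Fin.natAdd A k)) = _
    rw [mul_comm]
    congr 2 with k
    · exact glue_apply_outside v r (σL k)
    · exact glue_apply_of_eq v r (by simp)
  have hsliceR : ∀ w r, Φ (windowEquiv le_rfl (w, r)) = φ (r ∘ σR) * ψ w := fun w r => by
    show φ (fun k => glue w r (Fin.castAdd B k)) * ψ (fun k => glue w r (Fin.natAdd A k)) = _
    congr 2 with k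
    · exact glue_apply_outside w r (σR k)
    · exact glue_apply_of_eq w r (by simp)
  have hΦ : ∑ x, ‖Φ x‖ ^ 2 = 1 := by
    simp only [sum_norm_sq_eq_sum_blocks (windowEquiv hL), hsliceL, norm_mul, mul_pow, ← mul_sum,
      hφ, mul_one]
    rw [sum_comp_of_bijective hσL (fun w => ‖ψ w‖ ^ 2), hψ]
  have hleft := sum_bondEnergy_window_of_slices hL h hsliceL
  have hright := sum_bondEnergy_window_of_slices le_rfl h hsliceR
  rw [sum_comp_of_bijective hσL (fun w => ‖ψ w‖ ^ 2), hψ, ← hφE, one_mul] at hleft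
  rw [sum_comp_of_bijective hσR (fun w => ‖φ w‖ ^ 2), hφ, ← hψE, one_mul] at hright
  have hmid := abs_bondEnergy_le h Φ (A - 1)
  rw [hΦ, mul_one] at hmid
  have hground := (isLeast_groundEnergy (chainH (A + B) h)).2 ⟨Φ, hΦ, rfl⟩
  rw [energyR_chainH_add h hA hB, hleft, hright] at hground
  linarith [(abs_le.1 hmid).2]

variable {h}

lemma le_groundEnergy_chainH (hop : opNorm h ≤ 1) {N ℓ : ℕ} (hN : 0 < N) (hℓ : 0 < ℓ) :
    (ℓ * groundEnergy (chainH N h) - ℓ - N + 2) / N ≤ groundEnergy (chainH ℓ h) := by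
  have hsuper := apply_mul_le_of_le_add_add (g := fun m => -groundEnergy (chainH m h)) (C := 1)
    (fun a b ha hb => by linarith [groundEnergy_chainH_add_sub_one_le h hop ha hb]) hN hℓ
  have hsub := apply_mul_le_of_le_add_add (g := fun m => groundEnergy (chainH m h)) (C := 1)
    (fun a b ha hb => groundEnergy_chainH_add_le h hop ha hb) hℓ hN
  rw [mul_comm ℓ N] at hsuper
  rw [div_le_iff₀ (by exact_mod_cast hN)]
  linarith

noncomputable def runBound (M : ℝ) (N ℓ : ℕ) : ℝ :=
  (ℓ * M - ℓ - N + 2) / N / 3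

lemma runBound_le_groundEnergy_div_three (hop : opNorm h ≤ 1) {N ℓ : ℕ} (hN : 0 < N)
    (hℓ : 0 < ℓ) {M : ℝ} (hM : M ≤ groundEnergy (chainH N h)) :
    runBound M N ℓ ≤ groundEnergy (chainH ℓ h) / 3 := by
  have hscale : ℓ * M ≤ ℓ * groundEnergy (chainH N h) :=
    mul_le_mul_of_nonneg_left hM (Nat.cast_nonneg _)
  have : (ℓ * M - ℓ - N + 2) / N ≤ groundEnergy (chainH ℓ h) :=
    (div_le_div_of_nonneg_right (by linarith) (Nat.cast_nonneg _)).trans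
      (le_groundEnergy_chainH hop hN hℓ)
  rw [runBound]
  linarith

end ChainGroundEnergy

lemma runBound_add_le (M : ℝ) {N : ℕ} (hN : 0 < N) (a b : ℕ) :
    runBound M N (a + b) ≤ runBound M N a + 1 + runBound M N b := by
  have : runBound M N a + 1 + runBound M N b - runBound M N (a + b) = (2 * N + 2) / (3 * N) := by
    simp only [runBound]
    push_cast
    field_simp
    ring
  have : 0 ≤ (2 * (N : ℝ) + 2) / (3 * N) := by positivity
  linarith

lemma runBound_add_one_add (M : ℝ) {N u : ℕ} (hN : 0 < N) (hu : u ≤ N) :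
    runBound M N u + 1 + runBound M N (N - u) = M / 3 + 4 / (3 * N) := by
  have : (N : ℝ) ≠ 0 := by positivity
  simp only [runBound]
  push_cast [Nat.cast_sub hu]
  field_simp
  ring

section Sectors

lemma eq_of_eq_off_bond {N : ℕ} {β : Type*} {f g : Fin N → β} {i : ℕ} (hi : i + 1 < N)
    (hoff : ∀ j : Fin N, j.val ≠ i → j.val ≠ i + 1 → f j = g j)
    (hi0 : f ⟨i, by omega⟩ = g ⟨i, by omega⟩) (hi1 : f ⟨i + 1, hi⟩ = g ⟨i + 1, hi⟩) : f = g := by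
  funext j
  by_cases hj0 : j.val = i
  · rwa [show j = ⟨i, by omega⟩ from Fin.ext hj0]
  by_cases hj1 : j.val = i + 1
  · rwa [show j = ⟨i + 1, hi⟩ from Fin.ext hj1]
  exact hoff j hj0 hj1

variable (N : ℕ) {d : ℕ} (h0 h1 : Matrix (Fin d × Fin d) (Fin d × Fin d) ℂ)

noncomputable def sectorBond (c : ℕ → Fin 2) (i : ℕ) (hi : i + 1 < N) :
    Matrix (Fin N → Fin d) (Fin N → Fin d) ℂ :=
  if c i = c (i + 1) then (1 / 3 : ℂ) • twoSite N (![h0, h1] (c i)) i hi else 1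

noncomputable def sectorH (c : ℕ → Fin 2) : Matrix (Fin N → Fin d) (Fin N → Fin d) ℂ :=
  ∑ i : Fin (N - 1), sectorBond N h0 h1 c i (by omega)

def ancillaEquiv : (Fin N → Fin d) × (Fin N → Fin 2) ≃ (Fin N → Fin d × Fin 2) :=
  (Equiv.arrowProdEquivProdArrow (Fin N) (fun _ => Fin d) (fun _ => Fin 2)).symm

def ancillaSeq (a : Fin N → Fin 2) (u : ℕ) : Fin 2 :=
  if hu : u < N then a ⟨u, hu⟩ else 0

variable {N}

lemma sectorBond_apply (c : ℕ → Fin 2) {i : ℕ} (hi : i + 1 < N) (v w : Fin N → Fin d) :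
    sectorBond N h0 h1 c i hi v w
      = if c i = c (i + 1) then 1 / 3 * twoSite N (![h0, h1] (c i)) i hi v w
        else (1 : Matrix (Fin N → Fin d) (Fin N → Fin d) ℂ) v w := by
  unfold sectorBond
  split_ifs <;> rfl

lemma twoSite_Kterm_submatrix {i : ℕ} (hi : i + 1 < N) :
    (twoSite N (Kterm d h0 h1) i hi).submatrix (ancillaEquiv N) (ancillaEquiv N)
      = blockDiagonal fun a => sectorBond N h0 h1 (ancillaSeq N a) i hi := by
  ext ⟨v, a⟩ ⟨w, b⟩
  simp only [submatrix_apply, blockDiagonal_apply, ancillaEquiv,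
    Equiv.arrowProdEquivProdArrow_symm_apply, twoSite, Kterm, of_apply, Prod.mk.injEq]
  by_cases hab : a = b
  · subst hab
    have hp : ancillaSeq N a i = a ⟨i, by omega⟩ := dif_pos _
    have hq : ancillaSeq N a (i + 1) = a ⟨i + 1, hi⟩ := dif_pos hi
    simp only [and_true, and_self, if_true, sectorBond_apply, hp, hq]
    by_cases hP : ∀ j : Fin N, j.val ≠ i → j.val ≠ i + 1 → v j = w j
    · have hvw : v = w ↔ v ⟨i, by omega⟩ = w ⟨i, by omega⟩ ∧ v ⟨i + 1, hi⟩ = w ⟨i + 1, hi⟩ :=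
        ⟨by rintro rfl; simp, fun h => eq_of_eq_off_bond hi hP h.1 h.2⟩
      simp only [twoSite, of_apply, if_pos hP, one_apply, hvw]
      generalize a ⟨i, by omega⟩ = p, a ⟨i + 1, hi⟩ = q
      fin_cases p <;> fin_cases q <;> simp
    · simp only [twoSite, of_apply, if_neg hP, mul_zero,
        one_apply_ne fun hvw : v = w => hP fun j _ _ => congrFun hvw j, ite_self]
  · rw [if_neg hab, ite_eq_right_iff]
    intro hoff
    rw [if_neg]
    rintro ⟨hbond, hbond'⟩
    exact hab (eq_of_eq_off_bond hi (fun j hj hj' => (hoff j hj hj').2) hbond hbond')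

lemma energyR_chainH_Kterm (Ψ : (Fin N → Fin d × Fin 2) → ℂ) :
    energyR (chainH N (Kterm d h0 h1)) Ψ
      = ∑ a, energyR (sectorH N h0 h1 (ancillaSeq N a)) (fun v => Ψ (ancillaEquiv N (v, a))) := by
  simp only [energyR_chainH, sectorH, energyR_sum_bonds]
  rw [sum_comm]
  refine sum_congr rfl fun i hi => ?_
  have hi : i + 1 < N := by rw [mem_range] at hi; omega
  rw [bondEnergy_of_lt _ _ hi, energyR_eq_sum_blocks _ (twoSite_Kterm_submatrix h0 h1 hi)]
  simp only [bondEnergy_of_lt _ _ hi]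

lemma bondEnergy_sectorBond_of_eq (c : ℕ → Fin 2) (z : (Fin N → Fin d) → ℂ) {i : ℕ}
    (hc : c i = c (i + 1)) :
    bondEnergy N (sectorBond N h0 h1 c) z i
      = 1 / 3 * bondEnergy N (twoSite N (![h0, h1] (c i))) z i := by
  unfold bondEnergy
  split_ifs with hi
  · rw [sectorBond, if_pos hc, show (1 / 3 : ℂ) = ((1 / 3 : ℝ) : ℂ) by push_cast; rfl,
      energyR_ofReal_smul]
  · rw [mul_zero]

lemma bondEnergy_sectorBond_of_ne (c : ℕ → Fin 2) (z : (Fin N → Fin d) → ℂ) {i : ℕ}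
    (hi : i + 1 < N) (hc : c i ≠ c (i + 1)) :
    bondEnergy N (sectorBond N h0 h1 c) z i = ∑ v, ‖z v‖ ^ 2 := by
  rw [bondEnergy_of_lt _ _ hi, sectorBond, if_neg hc, energyR_one]

lemma exists_energyR_chainH_Kterm_eq (j : Fin 2) (φ : (Fin N → Fin d) → ℂ) :
    ∃ Ψ : (Fin N → Fin d × Fin 2) → ℂ, ∑ x, ‖Ψ x‖ ^ 2 = ∑ v, ‖φ v‖ ^ 2 ∧
      energyR (chainH N (Kterm d h0 h1)) Ψ = 1 / 3 * energyR (chainH N (![h0, h1] j)) φ := by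
  set Ψ : (Fin N → Fin d × Fin 2) → ℂ :=
    fun x => if (fun k => (x k).2) = fun _ => j then φ (fun k => (x k).1) else 0
  have hslice : ∀ v a, Ψ (ancillaEquiv N (v, a)) = if a = fun _ => j then φ v else 0 := by
    intro v a
    simp only [Ψ, ancillaEquiv, Equiv.arrowProdEquivProdArrow_symm_apply]
  refine ⟨Ψ, ?_, ?_⟩
  · rw [sum_norm_sq_eq_sum_blocks (ancillaEquiv N), sum_eq_single (fun _ => j)]
    · simp only [hslice, if_true]
    · intro a _ ha
      simp [hslice, if_neg ha]
    · exact fun h => absurd (mem_univ _) h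
  · rw [energyR_chainH_Kterm, sum_eq_single (fun _ => j)]
    · simp only [hslice, if_true]
      rw [sectorH, energyR_sum_bonds, energyR_chainH, mul_sum]
      refine sum_congr rfl fun i hi => ?_
      have hi : i + 1 < N := by rw [mem_range] at hi; omega
      have hc : ∀ u < N, ancillaSeq N (fun _ => j) u = j := fun u hu => dif_pos hu
      rw [bondEnergy_sectorBond_of_eq _ _ _ _ ((hc i (by omega)).trans (hc (i + 1) hi).symm),
        hc i (by omega)]
    · intro a _ ha
      simp only [hslice, if_neg ha]
      exact energyR_zero _
    · exact fun h => absurd (mem_univ _) h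

variable [Nonempty (Fin d)]

lemma groundEnergy_div_three_le_sum_sectorBond (c : ℕ → Fin 2) {z : (Fin N → Fin d) → ℂ}
    (hz : ∑ v, ‖z v‖ ^ 2 = 1) {s t : ℕ} (hst : s < t) (ht : t ≤ N)
    (hc : ∀ u ∈ Ico s t, c u = c s) :
    groundEnergy (chainH (t - s) (![h0, h1] (c s))) / 3
      ≤ ∑ i ∈ Ico s (t - 1), bondEnergy N (sectorBond N h0 h1 c) z i := by
  have hbond : ∀ i ∈ Ico s (t - 1), bondEnergy N (sectorBond N h0 h1 c) z i
      = 1 / 3 * bondEnergy N (twoSite N (![h0, h1] (c s))) z i := by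
    intro i hi
    rw [mem_Ico] at hi
    have hci : c i = c s := hc i (mem_Ico.2 ⟨hi.1, by omega⟩)
    have hci' : c (i + 1) = c s := hc (i + 1) (mem_Ico.2 ⟨by omega, by omega⟩)
    rw [bondEnergy_sectorBond_of_eq _ _ _ _ (hci.trans hci'.symm), hci]
  have hwindow := groundEnergy_mul_le_sum_bondEnergy (s := s) (L := t - s) (by omega)
    (![h0, h1] (c s)) z
  rw [hz, mul_one, show s + (t - s) - 1 = t - 1 by omega] at hwindow
  rw [sum_congr rfl hbond, ← mul_sum]
  linarith

lemma min_groundEnergy_div_three_mem_lowerBounds (hN : 0 < N) (hop0 : opNorm h0 ≤ 1)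
    (hop1 : opNorm h1 ≤ 1) (c : ℕ → Fin 2) :
    1 / 3 * min (groundEnergy (chainH N h0)) (groundEnergy (chainH N h1))
      ∈ lowerBounds (energies (sectorH N h0 h1 c)) := by
  set M := min (groundEnergy (chainH N h0)) (groundEnergy (chainH N h1))
  have hM : ∀ j, M ≤ groundEnergy (chainH N (![h0, h1] j)) :=
    Fin.forall_fin_two.2 ⟨min_le_left _ _, min_le_right _ _⟩
  have hop : ∀ j, opNorm (![h0, h1] j) ≤ 1 := Fin.forall_fin_two.2 ⟨hop0, hop1⟩
  rintro r ⟨z, hz, rfl⟩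
  rw [sectorH, energyR_sum_bonds, range_eq_Ico]
  set f := bondEnergy N (sectorBond N h0 h1 c) z
  by_cases hconst : ∀ u ∈ Ico 0 N, c u = c 0
  · have hrun := groundEnergy_div_three_le_sum_sectorBond h0 h1 c hz hN le_rfl hconst
    rw [Nat.sub_zero] at hrun
    linarith [hM (c 0)]
  have hrun : ∀ s t, s < t → t ≤ N → (∀ u ∈ Ico s t, c u = c s) →
      runBound M N (t - s) ≤ ∑ i ∈ Ico s (t - 1), f i := fun s t hst ht hc =>
    (runBound_le_groundEnergy_div_three (hop (c s)) hN (by omega) (hM (c s))).trans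
      (groundEnergy_div_three_le_sum_sectorBond h0 h1 c hz hst ht hc)
  have hwall : ∀ i, i + 1 < N → c i ≠ c (i + 1) → 1 ≤ f i := fun i hi hc =>
    ((bondEnergy_sectorBond_of_ne h0 h1 c z hi hc).trans hz).ge
  have hR : ∀ a b, 0 < a → 0 < b → runBound M N (a + b) ≤ runBound M N a + 1 + runBound M N b :=
    fun a b _ _ => runBound_add_le M hN a b
  obtain ⟨u, hu0, huN, hne⟩ := exists_ne_succ_of_not_forall_eq c hconst
  have hleft := le_sum_Ico_of_runs c f (runBound M N) 1 hR hrun hwall hu0 huN.le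
  have hright := le_sum_Ico_of_runs c f (runBound M N) 1 hR hrun hwall huN le_rfl
  have hmid := hwall (u - 1) (by omega) (by rwa [Nat.sub_add_cancel (by omega : 1 ≤ u)])
  have hsplit := runBound_add_one_add M hN huN.le
  have : 0 ≤ 4 / (3 * (N : ℝ)) := by positivity
  rw [sum_Ico_split f hu0 huN]
  rw [Nat.sub_zero] at hleft
  linarith

end Sectors

theorem ground_energy_of_K_general (N d : ℕ) (hN : 2 ≤ N)
    (h0 h1 : Matrix (Fin d × Fin d) (Fin d × Fin d) ℂ)
    (hnorm0 : opNorm h0 ≤ 1) (hnorm1 : opNorm h1 ≤ 1)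
    (E0 E1 : ℝ)
    (hE0 : IsLeast {r : ℝ | ∃ φ : (Fin N → Fin d) → ℂ,
      (∑ x, ‖φ x‖ ^ 2) = 1 ∧ r = energyR (chainH N h0) φ} E0)
    (hE1 : IsLeast {r : ℝ | ∃ φ : (Fin N → Fin d) → ℂ,
      (∑ x, ‖φ x‖ ^ 2) = 1 ∧ r = energyR (chainH N h1) φ} E1) :
    IsLeast {r : ℝ | ∃ φ : (Fin N → Fin d × Fin 2) → ℂ,
      (∑ x, ‖φ x‖ ^ 2) = 1 ∧ r = energyR (chainH N (Kterm d h0 h1)) φ}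
      ((1 / 3) * min E0 E1) := by
  have : Nonempty (Fin d) := ⟨(nonempty_of_mem_energies hE0.1).some (Fin.mk 0 (by omega))⟩
  refine ⟨?_, ?_⟩
  · have hE : ∀ j, IsLeast (energies (chainH N (![h0, h1] j))) (![E0, E1] j) :=
      Fin.forall_fin_two.2 ⟨hE0, hE1⟩
    obtain ⟨j, hj⟩ : ∃ j : Fin 2, min E0 E1 = ![E0, E1] j :=
      (min_choice E0 E1).elim (fun h => ⟨0, h⟩) (fun h => ⟨1, h⟩)
    obtain ⟨φ, hφ, hφE⟩ := (hE j).1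
    obtain ⟨Ψ, hΨ, hΨE⟩ := exists_energyR_chainH_Kterm_eq h0 h1 j φ
    exact ⟨Ψ, hΨ.trans hφ, by rw [hΨE, ← hφE, hj]⟩
  · rintro r ⟨Ψ, hΨ, rfl⟩
    have hlower :=
      min_groundEnergy_div_three_mem_lowerBounds h0 h1 (N := N) (by omega) hnorm0 hnorm1
    rw [show groundEnergy (chainH N h0) = E0 from hE0.csInf_eq,
      show groundEnergy (chainH N h1) = E1 from hE1.csInf_eq] at hlower
    calc 1 / 3 * min E0 E1 = 1 / 3 * min E0 E1 * ∑ x, ‖Ψ x‖ ^ 2 := by rw [hΨ, mul_one]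
      _ ≤ _ := by
        rw [sum_norm_sq_eq_sum_blocks (ancillaEquiv N), mul_sum, energyR_chainH_Kterm]
        exact sum_le_sum fun a _ => mul_le_energyR_of_mem_lowerBounds (hlower _) _

/-- The ground state energy of the combined Hamiltonian `K` equals `(1/3)·min_j E₀^{(j)}`. -/
theorem ground_energy_of_K (N d : ℕ) (hN : 2 ≤ N)
    (h0 h1 : Matrix (Fin d × Fin d) (Fin d × Fin d) ℂ)
    (hherm0 : h0.IsHermitian) (hherm1 : h1.IsHermitian)
    (hnorm0 : opNorm h0 ≤ 1) (hnorm1 : opNorm h1 ≤ 1)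
    (E0 E1 : ℝ)
    (hE0 : IsLeast {r : ℝ | ∃ φ : (Fin N → Fin d) → ℂ,
      (∑ x, ‖φ x‖ ^ 2) = 1 ∧ r = energyR (chainH N h0) φ} E0)
    (hE1 : IsLeast {r : ℝ | ∃ φ : (Fin N → Fin d) → ℂ,
      (∑ x, ‖φ x‖ ^ 2) = 1 ∧ r = energyR (chainH N h1) φ} E1)
    (hUniq0 : ∀ φ φ' : (Fin N → Fin d) → ℂ,
      (∑ x, ‖φ x‖ ^ 2) = 1 → (∑ x, ‖φ' x‖ ^ 2) = 1 →
      energyR (chainH N h0) φ = E0 → energyR (chainH N h0) φ' = E0 →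
      ∃ c : ℂ, φ' = c • φ)
    (hUniq1 : ∀ φ φ' : (Fin N → Fin d) → ℂ,
      (∑ x, ‖φ x‖ ^ 2) = 1 → (∑ x, ‖φ' x‖ ^ 2) = 1 →
      energyR (chainH N h1) φ = E1 → energyR (chainH N h1) φ' = E1 →
      ∃ c : ℂ, φ' = c • φ) :
    IsLeast {r : ℝ | ∃ φ : (Fin N → Fin d × Fin 2) → ℂ,
      (∑ x, ‖φ x‖ ^ 2) = 1 ∧ r = energyR (chainH N (Kterm d h0 h1)) φ}
      ((1 / 3) * min E0 E1) :=
  ground_energy_of_K_general N d hN h0 h1 hnorm0 hnorm1 E0 E1 hE0 hE1
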